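/- arXiv:0912.0047 — 2 statements merged into one kernel-verified Lean document; each statement's English description precedes it below -/
import Mathlib

section
/- Let X and Y be Poisson random variables with respective means λ and μ, where λ > μ > 0, and let k ≥ 0 be an integer. Then P(X ≤ k+1) ≤ P(Y ≤ k) if and only if ∫_μ^λ e^{μ−t} (t/μ)^{k+1} dt ≥ 1. -/
open MeasureTheory ProbabilityTheory
open scoped ENNReal

/-- The probability that a Poisson random variable with mean `lam` equals `n`. -/
noncomputable def poissonP (lam : ℝ) (n : ℕ) : ℝ :=
  Real.exp (-lam) * lam ^ n / n.factorial

/-- The probability that a Poisson random variable with mean `lam` is at most `n`. -/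
noncomputable def poissonCDF (lam : ℝ) (n : ℕ) : ℝ :=
  ∑ i ∈ Finset.range (n + 1), poissonP lam i

/-- The law of the simple point measure `δ_{U 1} + ⋯ + δ_{U n}` where `U 1, …, U n`
are i.i.d. with law `Q`. -/
noncomputable def configLaw {α : Type*} [MeasurableSpace α] (Q : Measure α) (n : ℕ) :
    Measure (Measure α) :=
  Measure.map (fun x : Fin n → α => ∑ i, Measure.dirac (x i)) (Measure.pi fun _ => Q)

/-- The law of a homogeneous Poisson point process of intensity `lam` on `S`
(with respect to the reference measure `base`): the number of points is Poisson with
mean `lam * base S`, and conditionally on having `n` points they are i.i.d. with the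
normalized restriction of `base` to `S`. -/
noncomputable def poissonPPLaw {α : Type*} [MeasurableSpace α] (base : Measure α) (lam : ℝ)
    (S : Set α) : Measure (Measure α) :=
  Measure.sum fun n : ℕ =>
    ENNReal.ofReal (poissonP (lam * (base S).toReal) n) •
      configLaw (ProbabilityTheory.cond base S) n

/-- A (deterministic, Poisson) thinning on `S` from `lam` to `mu`: a measurable map `f`
on simple point measures such that if `Π` has the law of a Poisson process of intensity
`lam` on `S` then `f Π` has the law of a Poisson process of intensity `mu` on `S`, and
almost surely every point of `f Π` is a point of `Π`. -/
def IsThinning {α : Type*} [MeasurableSpace α] (base : Measure α) (lam mu : ℝ) (S : Set α)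
    (f : Measure α → Measure α) : Prop :=
  Measurable f ∧ Measure.map f (poissonPPLaw base lam S) = poissonPPLaw base mu S ∧
    ∀ᵐ ν ∂ poissonPPLaw base lam S, f ν ≤ ν

lemma hasDerivAt_poissonCDF (n : ℕ) (l : ℝ) :
    HasDerivAt (fun l => poissonCDF l n) (-poissonP l n) l := by
  induction n with
  | zero =>
    have h : HasDerivAt (fun l : ℝ => Real.exp (-l)) (Real.exp (-l) * (-1)) l :=
      ((hasDerivAt_id l).neg).exp
    have : HasDerivAt (fun l => poissonCDF l 0) (Real.exp (-l) * (-1)) l := by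
      simpa [poissonCDF, poissonP] using h
    convert this using 1
    simp [poissonP]
  | succ n ih =>
    have h1 : HasDerivAt (fun l : ℝ => Real.exp (-l)) (Real.exp (-l) * (-1)) l :=
      ((hasDerivAt_id l).neg).exp
    have h2 : HasDerivAt (fun l : ℝ => l ^ (n + 1)) ((n + 1 : ℕ) * l ^ n) l :=
      hasDerivAt_pow (n + 1) l
    have h3 : HasDerivAt (fun l => poissonP l (n + 1))
        ((Real.exp (-l) * (-1) * l ^ (n + 1) + Real.exp (-l) * ((n + 1 : ℕ) * l ^ n))
          / (n + 1).factorial) l := by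
      simpa [poissonP] using (h1.mul h2).div_const ((n + 1).factorial : ℝ)
    have h4 : HasDerivAt (fun l => poissonCDF l (n + 1))
        (-poissonP l n + ((Real.exp (-l) * (-1) * l ^ (n + 1)
          + Real.exp (-l) * ((n + 1 : ℕ) * l ^ n)) / (n + 1).factorial)) l := by
      have : (fun l => poissonCDF l (n + 1)) =
          fun l => poissonCDF l n + poissonP l (n + 1) := by
        funext l
        simp [poissonCDF, Finset.sum_range_succ]
      rw [this]
      exact ih.add h3
    convert h4 using 1
    have hfac : ((n + 1).factorial : ℝ) = (n + 1) * n.factorial := by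
      push_cast [Nat.factorial_succ]; ring
    have hn : (n.factorial : ℝ) ≠ 0 := Nat.cast_ne_zero.mpr n.factorial_ne_zero
    have hn1 : ((n : ℝ) + 1) ≠ 0 := by positivity
    unfold poissonP
    rw [hfac]
    field_simp [poissonP, hfac]
    push_cast
    ring

lemma poissonP_pos {l : ℝ} (hl : 0 < l) (n : ℕ) : 0 < poissonP l n := by
  unfold poissonP
  positivity

/-- for Poisson `X, Y` with means `lam > mu > 0` and an integer `k ≥ 0`,
`P(X ≤ k+1) ≤ P(Y ≤ k)` if and only if `∫_mu^lam e^{mu - t} (t/mu)^{k+1} dt ≥ 1`. -/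
theorem statement15 (lam mu : ℝ) (hmu : 0 < mu) (hlm : mu < lam) (k : ℕ) :
    poissonCDF lam (k + 1) ≤ poissonCDF mu k ↔
      1 ≤ ∫ t in mu..lam, Real.exp (mu - t) * (t / mu) ^ (k + 1) := by
  have hp := poissonP_pos hmu (k + 1)
  have hcont : Continuous (fun t : ℝ => poissonP t (k + 1)) := by
    unfold poissonP
    exact ((Real.continuous_exp.comp continuous_neg).mul (continuous_pow _)).div_const _
  have hint : ∫ t in mu..lam, poissonP t (k + 1) =
      poissonCDF mu (k + 1) - poissonCDF lam (k + 1) := by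
    have := intervalIntegral.integral_eq_sub_of_hasDerivAt
      (f := fun t => -poissonCDF t (k + 1)) (f' := fun t => poissonP t (k + 1))
      (a := mu) (b := lam)
      (fun t _ => by
        have h := (hasDerivAt_poissonCDF (k + 1) t).neg
        simp only [neg_neg] at h
        exact h)
      (hcont.intervalIntegrable mu lam)
    linarith [this]
  have heq : (∫ t in mu..lam, Real.exp (mu - t) * (t / mu) ^ (k + 1)) =
      (∫ t in mu..lam, poissonP t (k + 1)) / poissonP mu (k + 1) := by
    rw [eq_div_iff hp.ne', ← intervalIntegral.integral_mul_const]
    apply intervalIntegral.integral_congr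
    intro t _
    unfold poissonP
    simp only [Real.exp_sub, Real.exp_neg]
    have hfac : ((k + 1).factorial : ℝ) ≠ 0 := Nat.cast_ne_zero.mpr (k+1).factorial_ne_zero
    have hmu0 : mu ≠ 0 := hmu.ne'
    field_simp
    rw [← mul_pow, div_mul_cancel₀ t hmu0]
  rw [heq, hint, le_div_iff₀ hp, one_mul]
  have hsucc : poissonCDF mu (k + 1) = poissonCDF mu k + poissonP mu (k + 1) := by
    simp [poissonCDF, Finset.sum_range_succ]
  constructor <;> intro h <;> linarith
end

section
/- Let λ > 0 and let S ⊂ ℝ^d be a Borel set with Lebesgue measure L(S) ∈ (0,∞). Let Π be a homogeneous Poisson point process of intensity λ on S. There does not exist a measurable function f from simple point measures on S to simple point measures on S such that f(Π) is a homogeneous Poisson point process on S of intensity strictly larger than λ. -/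
open MeasureTheory ProbabilityTheory
open scoped ENNReal

-- ratio identity
lemma poissonP_succ (t : ℝ) (n : ℕ) : poissonP t (n+1) = poissonP t n * (t / (n+1)) := by
  unfold poissonP
  rw [Nat.factorial_succ]
  push_cast
  field_simp
  ring

lemma poissonP_pos_s17 {t : ℝ} (ht : 0 < t) (n : ℕ) : 0 < poissonP t n := by
  unfold poissonP
  positivity

lemma poissonP_nonneg {t : ℝ} (ht : 0 ≤ t) (n : ℕ) : 0 ≤ poissonP t n := by
  unfold poissonP
  positivity

-- strict decrease of t ↦ poissonP t n on [n, ∞)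
lemma poissonP_strict_anti {n : ℕ} {s t : ℝ} (hs : 0 < s) (hns : (n:ℝ) ≤ s) (hst : s < t) :
    poissonP t n < poissonP s n := by
  have ht : 0 < t := hs.trans hst
  have hlog : Real.log t - Real.log s < t/s - 1 := by
    have h1 : Real.log (t/s) < t/s - 1 :=
      Real.log_lt_sub_one_of_pos (by positivity) (by
        intro h
        rw [div_eq_one_iff_eq (ne_of_gt hs)] at h
        exact absurd h (ne_of_gt hst))
    rwa [Real.log_div (ne_of_gt ht) (ne_of_gt hs)] at h1
  have hlogpos : 0 ≤ Real.log t - Real.log s := by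
    have := Real.log_le_log hs hst.le
    linarith
  have hkey : (n:ℝ) * Real.log t < (n:ℝ) * Real.log s + (t - s) := by
    have h2 : (n:ℝ) * (Real.log t - Real.log s) ≤ s * (Real.log t - Real.log s) :=
      mul_le_mul_of_nonneg_right hns hlogpos
    have h3 : s * (Real.log t - Real.log s) < s * (t/s - 1) :=
      (mul_lt_mul_iff_right₀ hs).2 hlog
    have h4 : s * (t/s - 1) = t - s := by field_simp
    nlinarith
  have hexp : t ^ n < s ^ n * Real.exp (t - s) := by
    have e1 : t ^ n = Real.exp ((n:ℝ) * Real.log t) := by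
      rw [Real.exp_nat_mul, Real.exp_log ht]
    have e2 : s ^ n * Real.exp (t - s) = Real.exp ((n:ℝ) * Real.log s + (t - s)) := by
      rw [Real.exp_add, Real.exp_nat_mul, Real.exp_log hs]
    rw [e1, e2]
    exact Real.exp_lt_exp.2 hkey
  unfold poissonP
  have hfac : (0:ℝ) < n.factorial := by positivity
  have hmain : Real.exp (-t) * t ^ n < Real.exp (-s) * s ^ n := by
    have h5 : Real.exp (-t) * (s ^ n * Real.exp (t - s)) = Real.exp (-s) * s ^ n := by
      rw [show Real.exp (-t) * (s ^ n * Real.exp (t - s)) = Real.exp (-t) * Real.exp (t-s) * s ^ n by ring, ← Real.exp_add]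
      ring_nf
    calc Real.exp (-t) * t ^ n < Real.exp (-t) * (s ^ n * Real.exp (t - s)) := by
          exact (mul_lt_mul_iff_right₀ (Real.exp_pos _)).2 hexp
      _ = Real.exp (-s) * s ^ n := h5
  exact div_lt_div_of_pos_right hmain hfac

lemma poissonP_anti {n : ℕ} {s t : ℝ} (hs : 0 < s) (hns : (n:ℝ) ≤ s) (hst : s ≤ t) :
    poissonP t n ≤ poissonP s n := by
  rcases eq_or_lt_of_le hst with h | h
  · rw [h]
  · exact (poissonP_strict_anti hs hns h).le


lemma poissonP_le_succ {t : ℝ} (ht : 0 ≤ t) {n : ℕ} (h : (n:ℝ)+1 ≤ t) :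
    poissonP t n ≤ poissonP t (n+1) := by
  rw [poissonP_succ]
  nth_rewrite 1 [← mul_one (poissonP t n)]
  refine mul_le_mul_of_nonneg_left ?_ (poissonP_nonneg ht n)
  rw [le_div_iff₀ (by positivity)]
  push_cast
  linarith

lemma poissonP_succ_le {t : ℝ} (ht : 0 ≤ t) {n : ℕ} (h : t ≤ (n:ℝ)+1) :
    poissonP t (n+1) ≤ poissonP t n := by
  rw [poissonP_succ]
  nth_rewrite 2 [← mul_one (poissonP t n)]
  refine mul_le_mul_of_nonneg_left ?_ (poissonP_nonneg ht n)
  rw [div_le_one (by positivity)]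
  push_cast
  linarith

lemma poissonP_climb {t : ℝ} (ht : 0 < t) :
    ∀ k n, n + k ≤ ⌊t⌋₊ → poissonP t n ≤ poissonP t (n+k) := by
  intro k
  induction k with
  | zero => intro n _; simp
  | succ k ih =>
    intro n hn
    have h1 : (n:ℝ) + 1 ≤ t := by
      have : (n+1 : ℕ) ≤ ⌊t⌋₊ := by omega
      have h2 : ((n+1 : ℕ):ℝ) ≤ (⌊t⌋₊ : ℝ) := Nat.cast_le.2 this
      have h3 := Nat.floor_le ht.le (R := ℝ) (a := t)
      push_cast at h2
      linarith
    calc poissonP t n ≤ poissonP t (n+1) := poissonP_le_succ ht.le h1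
      _ ≤ poissonP t (n+1+k) := ih (n+1) (by omega)
      _ = poissonP t (n+(k+1)) := by ring_nf

lemma poissonP_descend {t : ℝ} (ht : 0 < t) :
    ∀ k, poissonP t (⌊t⌋₊ + k) ≤ poissonP t ⌊t⌋₊ := by
  intro k
  induction k with
  | zero => simp
  | succ k ih =>
    have h1 : t ≤ ((⌊t⌋₊ + k : ℕ):ℝ) + 1 := by
      have := Nat.lt_floor_add_one t
      push_cast
      linarith
    calc poissonP t (⌊t⌋₊ + (k+1)) = poissonP t ((⌊t⌋₊ + k) + 1) := by ring_nf
      _ ≤ poissonP t (⌊t⌋₊ + k) := poissonP_succ_le ht.le h1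
      _ ≤ poissonP t ⌊t⌋₊ := ih

lemma poissonP_le_floor {t : ℝ} (ht : 0 < t) (m : ℕ) :
    poissonP t m ≤ poissonP t ⌊t⌋₊ := by
  rcases le_or_gt m ⌊t⌋₊ with h | h
  · obtain ⟨k, hk⟩ := Nat.exists_eq_add_of_le h
    calc poissonP t m ≤ poissonP t (m + k) := poissonP_climb ht k m (by omega)
      _ = poissonP t ⌊t⌋₊ := by rw [← hk]
  · obtain ⟨k, hk⟩ := Nat.exists_eq_add_of_le h.le
    rw [hk]
    exact poissonP_descend ht k

lemma poissonP_floor_strict {s t : ℝ} (hs : 0 < s) (hst : s < t) :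
    poissonP t ⌊t⌋₊ < poissonP s ⌊s⌋₊ := by
  set a := ⌊s⌋₊ with ha
  set b := ⌊t⌋₊ with hb
  have hab : a ≤ b := Nat.floor_mono hst.le
  have has : (a:ℝ) ≤ s := Nat.floor_le hs.le
  have hlt1 : s < (a:ℝ) + 1 := Nat.lt_floor_add_one s
  rcases eq_or_lt_of_le hab with h | h
  · rw [← h]
    exact poissonP_strict_anti hs has hst
  · have hbt : (b:ℝ) ≤ t := Nat.floor_le (hs.trans hst).le
    have hb1 : (1:ℕ) ≤ b := by omega
    have hbpos : (0:ℝ) < (b:ℝ) := by exact_mod_cast Nat.pos_of_ne_zero (by omega)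
    have h1 : poissonP t b ≤ poissonP (b:ℝ) b := poissonP_anti hbpos le_rfl hbt
    have hD : ∀ n : ℕ, 1 ≤ n → poissonP ((n:ℝ)+1) (n+1) ≤ poissonP (n:ℝ) n := by
      intro n hn
      have hnpos : (0:ℝ) < (n:ℝ) := by exact_mod_cast hn
      have heq : poissonP ((n:ℝ)+1) (n+1) = poissonP ((n:ℝ)+1) n := by
        rw [poissonP_succ, div_self (by positivity), mul_one]
      rw [heq]
      exact poissonP_anti hnpos le_rfl (by linarith)
    have chainD : ∀ j : ℕ, poissonP ((a:ℝ)+1+(j:ℝ)) (a+1+j) ≤ poissonP ((a:ℝ)+1) (a+1) := by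
      intro j
      induction j with
      | zero => simp
      | succ j ih =>
        have step := hD (a+1+j) (by omega)
        push_cast at step ⊢
        have e1 : (a:ℝ) + 1 + (↑j + 1) = ↑a + 1 + ↑j + 1 := by ring
        have e2 : a + 1 + (j + 1) = a + 1 + j + 1 := by omega
        rw [e1, e2]
        exact step.trans ih
    obtain ⟨j, hj⟩ : ∃ j, b = a+1+j := ⟨b - (a+1), by omega⟩
    have h2 : poissonP ((a:ℝ)+1) (a+1) = poissonP ((a:ℝ)+1) a := by
      rw [poissonP_succ, div_self (by positivity), mul_one]
    have h3 : poissonP ((a:ℝ)+1) a < poissonP s a := poissonP_strict_anti hs has hlt1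
    have h4 : poissonP ((b:ℝ)) b ≤ poissonP ((a:ℝ)+1) (a+1) := by
      have := chainD j
      rw [hj]
      convert this using 2 <;> push_cast <;> ring
    calc poissonP t b ≤ poissonP (b:ℝ) b := h1
      _ ≤ poissonP ((a:ℝ)+1) (a+1) := h4
      _ = poissonP ((a:ℝ)+1) a := h2
      _ < poissonP s a := h3

lemma sumDirac_measurable {α : Type*} [MeasurableSpace α] (n : ℕ) :
    Measurable (fun x : Fin n → α => ∑ i, Measure.dirac (x i)) := by
  apply Measure.measurable_of_measurable_coe
  intro A hA
  simp only [Measure.finset_sum_apply]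
  apply Finset.measurable_sum
  intro i _
  simp only [Measure.dirac_apply' _ hA]
  exact (measurable_one.indicator hA).comp (measurable_pi_apply i)

open Classical in
lemma sumDirac_apply {α : Type*} [MeasurableSpace α] {n : ℕ} (x : Fin n → α) {A : Set α}
    (hA : MeasurableSet A) :
    (∑ i, Measure.dirac (x i)) A = ((∑ i, if x i ∈ A then 1 else 0 : ℕ) : ℝ≥0∞) := by
  classical
  rw [Measure.finset_sum_apply]
  push_cast
  apply Finset.sum_congr rfl
  intro i _
  rw [Measure.dirac_apply' _ hA, Set.indicator_apply]
  split <;> simp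

lemma sumDirac_univ {α : Type*} [MeasurableSpace α] {n : ℕ} (x : Fin n → α) :
    (∑ i, Measure.dirac (x i)) Set.univ = (n : ℝ≥0∞) := by
  rw [sumDirac_apply x MeasurableSet.univ]
  simp


lemma poissonPPLaw_apply {α : Type*} [MeasurableSpace α] (base : Measure α) (l : ℝ) (S : Set α)
    {B : Set (Measure α)} (hB : MeasurableSet B) :
    poissonPPLaw base l S B = ∑' n : ℕ, ENNReal.ofReal (poissonP (l * (base S).toReal) n) *
      (Measure.pi fun _ : Fin n => ProbabilityTheory.cond base S)
        ((fun x : Fin n → α => ∑ i, Measure.dirac (x i)) ⁻¹' B) := by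
  rw [poissonPPLaw, Measure.sum_apply _ hB]
  congr 1
  ext n
  rw [Measure.smul_apply, smul_eq_mul, configLaw,
    Measure.map_apply (sumDirac_measurable n) hB]

lemma natval_lt_one {y : ℝ≥0∞} (h : ∃ m : ℕ, y = m) (hlt : y < 1) : y = 0 := by
  obtain ⟨m, rfl⟩ := h
  rcases Nat.eq_zero_or_pos m with h0 | h0
  · simp [h0]
  · exfalso
    have : (1:ℝ≥0∞) ≤ m := by exact_mod_cast h0
    exact absurd hlt (not_lt.2 this)

lemma exists_atom_real (y : Measure ℝ) [IsFiniteMeasure y]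
    (hint : ∀ A : Set ℝ, MeasurableSet A → ∃ m : ℕ, y A = m)
    (h1 : 1 ≤ y Set.univ) : ∃ a : ℝ, 1 ≤ y {a} := by
  set G : ℝ → ℝ≥0∞ := fun s => y (Set.Iic s) with hG
  have hmono : Monotone G := fun u v huv => measure_mono (Set.Iic_subset_Iic.2 huv)
  have hnat : ∀ s, ∃ m : ℕ, G s = m := fun s => hint _ measurableSet_Iic
  have hsmall : ∀ s, G s < 1 → G s = 0 := fun s h => natval_lt_one (hnat s) h
  -- ∃ s with 1 ≤ G s
  have hbig : ∃ s : ℝ, 1 ≤ G s := by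
    by_contra hcon
    push_neg at hcon
    have hzero : ∀ n : ℕ, G (n:ℝ) = 0 := fun n => hsmall _ (hcon _)
    have hU : (⋃ n : ℕ, Set.Iic ((n:ℝ))) = Set.univ := by
      ext x
      simp only [Set.mem_iUnion, Set.mem_Iic, Set.mem_univ, iff_true]
      obtain ⟨n, hn⟩ := exists_nat_gt x
      exact ⟨n, hn.le⟩
    have : y Set.univ = 0 := by
      rw [← hU]
      exact measure_iUnion_null fun n => hzero n
    rw [this] at h1
    exact absurd h1 (by simp)
  -- ∃ s with G s = 0
  have hzero : ∃ s0 : ℝ, G s0 = 0 := by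
    have hI : (⋂ n : ℕ, Set.Iic (-(n:ℝ))) = ∅ := by
      ext x
      simp only [Set.mem_iInter, Set.mem_Iic, Set.mem_empty_iff_false, iff_false, not_forall,
        not_le]
      obtain ⟨n, hn⟩ := exists_nat_gt (-x)
      exact ⟨n, by linarith⟩
    have htend : Filter.Tendsto (fun n : ℕ => G (-(n:ℝ))) Filter.atTop (nhds 0) := by
      have := tendsto_measure_iInter_atTop (μ := y)
        (s := fun n : ℕ => Set.Iic (-(n:ℝ)))
        (fun n => measurableSet_Iic.nullMeasurableSet)
        (fun u v huv => Set.Iic_subset_Iic.2 (by have : (u:ℝ) ≤ (v:ℝ) := Nat.cast_le.2 huv; linarith))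
        ⟨0, measure_ne_top y _⟩
      rw [hI] at this
      simp only [measure_empty] at this
      exact this
    have : ∀ᶠ n : ℕ in Filter.atTop, G (-(n:ℝ)) < 1 :=
      htend.eventually_lt_const (by norm_num)
    obtain ⟨n, hn⟩ := this.exists
    exact ⟨-(n:ℝ), hsmall _ hn⟩
  obtain ⟨s0, hs0⟩ := hzero
  set T : Set ℝ := {s | 1 ≤ G s} with hT
  have hTne : T.Nonempty := hbig
  have hTbdd : BddBelow T := by
    refine ⟨s0, fun s hs => ?_⟩
    by_contra hcon
    push_neg at hcon
    have : G s ≤ G s0 := hmono hcon.le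
    rw [hs0] at this
    have : G s = 0 := le_antisymm this zero_le
    rw [hT] at hs
    simp only [Set.mem_setOf_eq] at hs
    rw [this] at hs
    exact absurd hs (by simp)
  set t0 := sInf T with ht0
  -- 1 ≤ y (Iic t0)
  have hup : 1 ≤ y (Set.Iic t0) := by
    have hIic : (⋂ n : ℕ, Set.Iic (t0 + 1/((n:ℝ)+1))) = Set.Iic t0 := by
      ext x
      simp only [Set.mem_iInter, Set.mem_Iic]
      constructor
      · intro h
        by_contra hx
        push_neg at hx
        obtain ⟨n, hn⟩ := exists_nat_one_div_lt (show (0:ℝ) < x - t0 by linarith)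
        have := h n
        linarith
      · intro h n
        have : (0:ℝ) < 1/((n:ℝ)+1) := by positivity
        linarith
    have htend : Filter.Tendsto (fun n : ℕ => G (t0 + 1/((n:ℝ)+1))) Filter.atTop
        (nhds (y (Set.Iic t0))) := by
      have := tendsto_measure_iInter_atTop (μ := y)
        (s := fun n : ℕ => Set.Iic (t0 + 1/((n:ℝ)+1)))
        (fun n => measurableSet_Iic.nullMeasurableSet)
        (fun u v huv => Set.Iic_subset_Iic.2 (by
          have : ((u:ℝ)+1) ≤ ((v:ℝ)+1) := by exact_mod_cast Nat.succ_le_succ huv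
          have h0 : (0:ℝ) < (u:ℝ)+1 := by positivity
          have := one_div_le_one_div_of_le h0 this
          linarith))
        ⟨0, measure_ne_top y _⟩
      rw [hIic] at this
      exact this
    refine ge_of_tendsto htend (Filter.Eventually.of_forall fun n => ?_)
    obtain ⟨s, hsT, hss⟩ := csInf_lt_iff hTbdd hTne |>.1
      (show sInf T < t0 + 1/((n:ℝ)+1) by
        have : (0:ℝ) < 1/((n:ℝ)+1) := by positivity
        rw [← ht0]; linarith)
    exact le_trans hsT (hmono hss.le)
  -- y (Iio t0) = 0
  have hlow : y (Set.Iio t0) = 0 := by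
    have hIio : Set.Iio t0 = ⋃ n : ℕ, Set.Iic (t0 - 1/((n:ℝ)+1)) := by
      ext x
      simp only [Set.mem_Iio, Set.mem_iUnion, Set.mem_Iic]
      constructor
      · intro h
        obtain ⟨n, hn⟩ := exists_nat_one_div_lt (show (0:ℝ) < t0 - x by linarith)
        exact ⟨n, by linarith⟩
      · intro ⟨n, hn⟩
        have : (0:ℝ) < 1/((n:ℝ)+1) := by positivity
        linarith
    rw [hIio]
    refine measure_iUnion_null fun n => ?_
    apply hsmall
    by_contra hcon
    push_neg at hcon
    have hmem : t0 - 1/((n:ℝ)+1) ∈ T := hcon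
    have := csInf_le hTbdd hmem
    rw [← ht0] at this
    have hpos : (0:ℝ) < 1/((n:ℝ)+1) := by positivity
    linarith
  refine ⟨t0, ?_⟩
  have hsplit : Set.Iic t0 = Set.Iio t0 ∪ {t0} := (Set.Iio_union_right).symm
  calc (1:ℝ≥0∞) ≤ y (Set.Iic t0) := hup
    _ ≤ y (Set.Iio t0) + y {t0} := by rw [hsplit]; exact measure_union_le _ _
    _ = y {t0} := by rw [hlow, zero_add]

lemma exists_atom_pi {d : ℕ} (hd : 0 < d) (y : Measure (Fin d → ℝ)) [IsFiniteMeasure y]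
    (hint : ∀ A : Set (Fin d → ℝ), MeasurableSet A → ∃ m : ℕ, y A = m)
    (h1 : 1 ≤ y Set.univ) : ∃ a : Fin d → ℝ, 1 ≤ y {a} := by
  have hne : Nonempty (Fin d) := ⟨⟨0, hd⟩⟩
  have hunc : ¬ Countable (Fin d → ℝ) := by
    intro h
    have hinj : Function.Injective (fun r : ℝ => (fun _ : Fin d => r)) := by
      intro a b hab
      exact congrFun hab hne.some
    exact not_countable (hinj.countable)
  let e : (Fin d → ℝ) ≃ᵐ ℝ := PolishSpace.measurableEquivOfNotCountable hunc not_countable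
  set y' : Measure ℝ := y.map e with hy'
  haveI : IsFiniteMeasure y' := by
    constructor
    rw [hy', Measure.map_apply e.measurable MeasurableSet.univ]
    exact measure_lt_top _ _
  have hint' : ∀ A : Set ℝ, MeasurableSet A → ∃ m : ℕ, y' A = m := by
    intro A hA
    rw [hy', Measure.map_apply e.measurable hA]
    exact hint _ (e.measurable hA)
  have h1' : 1 ≤ y' Set.univ := by
    rw [hy', Measure.map_apply e.measurable MeasurableSet.univ]
    simpa using h1
  obtain ⟨a', ha'⟩ := exists_atom_real y' hint' h1'
  refine ⟨e.symm a', ?_⟩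
  rw [hy', Measure.map_apply e.measurable (measurableSet_singleton a')] at ha'
  have : e ⁻¹' {a'} = {e.symm a'} := by
    ext x
    simp only [Set.mem_preimage, Set.mem_singleton_iff]
    exact ⟨fun h => by simp [← h], fun h => by simp [h]⟩
  rwa [this] at ha'
/-- no deterministic thickening: if `PP` is a Poisson process of
intensity `lam` on a Borel set `S` of finite positive volume, there is no measurable
`f` such that `f(PP)` is a Poisson process on `S` of intensity strictly larger
than `lam`. -/
theorem statement17 {d : ℕ} (lam : ℝ) (hlam : 0 < lam)
    (S : Set (Fin d → ℝ)) (hS : MeasurableSet S)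
    (hpos : 0 < volume S) (hfin : volume S < ⊤)
    {Ω : Type*} [MeasurableSpace Ω] (P : Measure Ω) [IsProbabilityMeasure P]
    (PP : Ω → Measure (Fin d → ℝ)) (hPPmeas : Measurable PP)
    (hPP : P.map PP = poissonPPLaw volume lam S) :
    ¬ ∃ (lam' : ℝ) (f : Measure (Fin d → ℝ) → Measure (Fin d → ℝ)),
        lam < lam' ∧ Measurable f ∧ P.map (f ∘ PP) = poissonPPLaw volume lam' S := by
  rintro ⟨lam', f, hlt, hfmeas, hmap⟩
  set Q : Measure (Fin d → ℝ) := ProbabilityTheory.cond volume S with hQ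
  set T : ℝ := (volume S).toReal with hTdef
  have hT0 : 0 < T := ENNReal.toReal_pos hpos.ne' hfin.ne
  have hmu : 0 < lam * T := by positivity
  have hmu' : lam * T < lam' * T := by nlinarith
  haveI hQP : IsProbabilityMeasure Q :=
    ProbabilityTheory.cond_isProbabilityMeasure_of_finite hpos.ne' hfin.ne
  have hLmap : Measure.map f (poissonPPLaw volume lam S) = poissonPPLaw volume lam' S := by
    calc Measure.map f (poissonPPLaw volume lam S) = Measure.map f (P.map PP) := by rw [hPP]
      _ = P.map (f ∘ PP) := Measure.map_map hfmeas hPPmeas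
      _ = poissonPPLaw volume lam' S := hmap
  have key : ∀ (l : ℝ) {B : Set (Measure (Fin d → ℝ))}, MeasurableSet B →
      poissonPPLaw volume l S B = ∑' n : ℕ, ENNReal.ofReal (poissonP (l * T) n) *
        (Measure.pi fun _ : Fin n => Q)
          ((fun x : Fin n → (Fin d → ℝ) => ∑ i, Measure.dirac (x i)) ⁻¹' B) :=
    fun l B hB => poissonPPLaw_apply volume l S hB
  -- the sets counting total mass
  set Bc : ℝ≥0∞ → Set (Measure (Fin d → ℝ)) :=
    fun c => (fun ν : Measure (Fin d → ℝ) => ν Set.univ) ⁻¹' {c} with hBc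
  have hBcm : ∀ c, MeasurableSet (Bc c) :=
    fun c => Measure.measurable_coe MeasurableSet.univ (measurableSet_singleton c)
  have hpre : ∀ (n : ℕ) (c : ℝ≥0∞),
      ((fun x : Fin n → (Fin d → ℝ) => ∑ i, Measure.dirac (x i)) ⁻¹' (Bc c))
        = if (n : ℝ≥0∞) = c then Set.univ else ∅ := by
    intro n c
    ext x
    simp only [hBc, Set.mem_preimage, Set.mem_singleton_iff, sumDirac_univ]
    split <;> simp_all
  have hvalNat : ∀ (l : ℝ) (m : ℕ),
      poissonPPLaw volume l S (Bc m) = ENNReal.ofReal (poissonP (l * T) m) := by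
    intro l m
    rw [key l (hBcm m), tsum_eq_single m ?_]
    · rw [hpre m m, if_pos rfl, measure_univ, mul_one]
    · intro n hn
      rw [hpre n m, if_neg (by exact_mod_cast hn), measure_empty, mul_zero]
  have hvalNone : ∀ (l : ℝ) (c : ℝ≥0∞), (∀ m : ℕ, (m : ℝ≥0∞) ≠ c) →
      poissonPPLaw volume l S (Bc c) = 0 := by
    intro l c hc
    rw [key l (hBcm c)]
    rw [tsum_eq_single 0 ?_]
    · rw [hpre 0 c, if_neg (hc 0), measure_empty, mul_zero]
    · intro n hn
      rw [hpre n c, if_neg (hc n), measure_empty, mul_zero]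
  -- lower bound machinery
  have hlb : ∀ {B : Set (Measure (Fin d → ℝ))}, MeasurableSet B →
      ∀ (ν₀ : Measure (Fin d → ℝ)) (c : ℝ≥0∞), f ν₀ ∈ B → ν₀ Set.univ = c →
      (∀ ν : Measure (Fin d → ℝ), ν Set.univ = c → ν = ν₀) →
      poissonPPLaw volume lam S (Bc c) ≤ poissonPPLaw volume lam' S B := by
    intro B hB ν₀ c hf hc huniq
    rw [← hLmap, Measure.map_apply hfmeas hB]
    apply measure_mono
    intro ν hν
    simp only [hBc, Set.mem_preimage, Set.mem_singleton_iff] at hν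
    have : ν = ν₀ := huniq ν hν
    rw [Set.mem_preimage, this]
    exact hf
  rcases Nat.eq_zero_or_pos d with hd | hd
  · -- degenerate dimension 0 : use the mode of the Poisson distribution
    subst hd
    have hsub : ∀ A : Set (Fin 0 → ℝ), A = ∅ ∨ A = Set.univ := by
      intro A
      rcases Set.eq_empty_or_nonempty A with h | h
      · exact Or.inl h
      · refine Or.inr ?_
        obtain ⟨x, hx⟩ := h
        apply Set.eq_univ_of_forall
        intro z
        rwa [Subsingleton.elim z x]
    have huniq : ∀ ν₀ ν : Measure (Fin 0 → ℝ), ν Set.univ = ν₀ Set.univ → ν = ν₀ := by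
      intro ν₀ ν h
      ext A hA
      rcases hsub A with rfl | rfl
      · simp
      · exact h
    set n₀ := ⌊lam * T⌋₊ with hn₀
    set pt : Fin 0 → ℝ := fun i => i.elim0 with hpt
    set ν₀ : Measure (Fin 0 → ℝ) := (n₀ : ℝ≥0∞) • Measure.dirac pt with hν₀
    have hν₀u : ν₀ Set.univ = (n₀ : ℝ≥0∞) := by
      rw [hν₀, Measure.smul_apply, smul_eq_mul, measure_univ, mul_one]
    set c := (f ν₀) Set.univ with hc
    have hin : f ν₀ ∈ Bc c := by simp [hBc, hc]
    have hle := hlb (hBcm c) ν₀ ((n₀ : ℕ) : ℝ≥0∞) hin hν₀u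
      (fun ν hν => huniq ν₀ ν (by rw [hν, hν₀u]))
    rw [hvalNat lam n₀] at hle
    by_cases hm : ∃ m : ℕ, (m : ℝ≥0∞) = c
    · obtain ⟨m₀, hm₀⟩ := hm
      rw [← hm₀, hvalNat lam' m₀] at hle
      have hreal : poissonP (lam * T) n₀ ≤ poissonP (lam' * T) m₀ :=
        (ENNReal.ofReal_le_ofReal_iff (poissonP_nonneg (hmu.trans hmu').le m₀)).1 hle
      have hstrict : poissonP (lam' * T) m₀ < poissonP (lam * T) n₀ := by
        calc poissonP (lam' * T) m₀ ≤ poissonP (lam' * T) ⌊lam' * T⌋₊ :=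
              poissonP_le_floor (hmu.trans hmu') m₀
          _ < poissonP (lam * T) ⌊lam * T⌋₊ := poissonP_floor_strict hmu hmu'
      linarith
    · push_neg at hm
      rw [hvalNone lam' c hm] at hle
      exact absurd (le_antisymm hle zero_le)
        (ne_of_gt (ENNReal.ofReal_pos.2 (poissonP_pos_s17 hmu n₀)))
  · -- dimension at least 1 : use the atom at the empty configuration
    haveI : NullSingletonClass Q := by
      constructor
      intro a
      have hsing : volume ({a} : Set (Fin d → ℝ)) = 0 := by
        have hset : ({a} : Set (Fin d → ℝ)) = Set.pi Set.univ (fun i => {a i}) := by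
          ext x
          simp [Set.mem_singleton_iff, funext_iff]
        rw [hset, volume_pi_pi]
        exact Finset.prod_eq_zero (Finset.mem_univ (⟨0, hd⟩ : Fin d)) (by simp)
      rw [hQ, ProbabilityTheory.cond_apply hS]
      rw [measure_mono_null Set.inter_subset_right hsing, mul_zero]
    set y := f 0 with hy
    have hin0 : ∀ {B : Set (Measure (Fin d → ℝ))}, MeasurableSet B → y ∈ B →
        ENNReal.ofReal (poissonP (lam * T) 0) ≤ poissonPPLaw volume lam' S B := by
      intro B hB hyB
      have h := hlb hB 0 0 hyB (by simp) (fun ν hν => Measure.measure_univ_eq_zero.1 hν)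
      rwa [show (0:ℝ≥0∞) = ((0:ℕ) : ℝ≥0∞) by simp, hvalNat lam 0] at h
    by_cases hall : ∀ A : Set (Fin d → ℝ), MeasurableSet A → ∃ m : ℕ, y A = m
    · by_cases h0 : y Set.univ = 0
      · have hyB : y ∈ Bc (((0:ℕ)) : ℝ≥0∞) := by simp [hBc, h0]
        have hle := hin0 (hBcm _) hyB
        rw [hvalNat lam' 0] at hle
        have hreal : poissonP (lam * T) 0 ≤ poissonP (lam' * T) 0 :=
          (ENNReal.ofReal_le_ofReal_iff (poissonP_nonneg ((hmu.trans hmu')).le 0)).1 hle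
        have hstrict : poissonP (lam' * T) 0 < poissonP (lam * T) 0 :=
          poissonP_strict_anti hmu (by exact_mod_cast hmu.le) hmu'
        linarith
      · obtain ⟨m₀, hm₀⟩ := hall Set.univ MeasurableSet.univ
        haveI : IsFiniteMeasure y := ⟨by rw [hm₀]; exact ENNReal.natCast_lt_top m₀⟩
        have h1 : 1 ≤ y Set.univ := by
          rw [hm₀]
          have hm0 : m₀ ≠ 0 := by
            rintro rfl
            rw [hm₀] at h0
            simp at h0
          exact_mod_cast Nat.one_le_iff_ne_zero.2 hm0
        obtain ⟨a, ha⟩ := exists_atom_pi hd y hall h1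
        set B : Set (Measure (Fin d → ℝ)) :=
          ((fun ν : Measure (Fin d → ℝ) => ν {a}) ⁻¹' {0})ᶜ with hB
        have hBmeas : MeasurableSet B :=
          ((Measure.measurable_coe (measurableSet_singleton a))
            (measurableSet_singleton 0)).compl
        have hyB : y ∈ B := by
          simp only [hB, Set.mem_compl_iff, Set.mem_preimage, Set.mem_singleton_iff]
          intro h
          rw [h] at ha
          exact absurd ha (by simp)
        have hz : poissonPPLaw volume lam' S B = 0 := by
          rw [key lam' hBmeas]
          refine ENNReal.tsum_eq_zero.2 fun n => ?_
          have hsubset : ((fun x : Fin n → (Fin d → ℝ) => ∑ i, Measure.dirac (x i)) ⁻¹' B)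
              ⊆ ⋃ i : Fin n, {x : Fin n → (Fin d → ℝ) | x i = a} := by
            intro x hx
            simp only [hB, Set.mem_preimage, Set.mem_compl_iff, Set.mem_singleton_iff] at hx
            by_contra hcon
            simp only [Set.mem_iUnion, Set.mem_setOf_eq, not_exists] at hcon
            apply hx
            rw [sumDirac_apply x (measurableSet_singleton a)]
            simp only [Nat.cast_eq_zero]
            exact Finset.sum_eq_zero fun i _ => by simp [hcon i]
          have hzero : (Measure.pi fun _ : Fin n => Q)
              (⋃ i : Fin n, {x : Fin n → (Fin d → ℝ) | x i = a}) = 0 :=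
            measure_iUnion_null fun i => Measure.pi_hyperplane (fun _ : Fin n => Q) i a
          rw [measure_mono_null hsubset hzero, mul_zero]
        have hle := hin0 hBmeas hyB
        rw [hz] at hle
        exact absurd (le_antisymm hle zero_le)
          (ne_of_gt (ENNReal.ofReal_pos.2 (poissonP_pos_s17 hmu 0)))
    · push_neg at hall
      obtain ⟨A, hA, hAm⟩ := hall
      set B := (fun ν : Measure (Fin d → ℝ) => ν A) ⁻¹' {y A} with hB
      have hBmeas : MeasurableSet B :=
        (Measure.measurable_coe hA) (measurableSet_singleton _)
      have hyB : y ∈ B := by simp [hB]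
      have hz : poissonPPLaw volume lam' S B = 0 := by
        rw [key lam' hBmeas]
        refine ENNReal.tsum_eq_zero.2 fun n => ?_
        have hempty : ((fun x : Fin n → (Fin d → ℝ) => ∑ i, Measure.dirac (x i)) ⁻¹' B) = ∅ := by
          ext x
          simp only [hB, Set.mem_preimage, Set.mem_singleton_iff, Set.mem_empty_iff_false,
            iff_false]
          rw [sumDirac_apply x hA]
          exact fun h => hAm _ h.symm
        rw [hempty, measure_empty, mul_zero]
      have hle := hin0 hBmeas hyB
      rw [hz] at hle
      exact absurd (le_antisymm hle zero_le)
        (ne_of_gt (ENNReal.ofReal_pos.2 (poissonP_pos_s17 hmu 0)))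
end
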